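/- arXiv:math/0606463 — 4 statements merged into one kernel-verified Lean document; each statement's English description precedes it below -/
import Mathlib

section
/- Let f_0,…,f_{n+1} ∈ k[x_0,…,x_n] be homogeneous of degree d ≥ 1, and for 0 ≤ i ≤ n+1 let Δ^i(x,y) denote the Bezoutian of the n+1 polynomials f_0,…,f̂_i,…,f_{n+1} (omitting f_i). Then in k[x_0,…,x_n,y_0,…,y_n] one has the identity ∑_{i=0}^{n+1} (−1)^i Δ^i(x,y)·f_i(x_0,…,x_n) = ∑_{i=0}^{n+1} (−1)^i Δ^i(x,y)·f_i(y_0,…,y_n). -/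
open MvPolynomial

noncomputable section

/-- The "mixed" variable assignment: variables with index `< j` are sent to the
`y`-variables (the second summand), variables with index `≥ j` to the `x`-variables
(the first summand). -/
def mixv (k : Type*) [Field k] (n : ℕ) (j : ℕ) :
    Fin (n + 1) → MvPolynomial (Fin (n + 1) ⊕ Fin (n + 1)) k :=
  fun i => if (i : ℕ) < j then X (Sum.inr i) else X (Sum.inl i)

/-- `D` is the `j`-th divided difference `Δ_j(f)` of `f`, i.e.
`D * (x_j - y_j) = f(y_0,…,y_{j-1},x_j,…,x_n) - f(y_0,…,y_j,x_{j+1},…,x_n)`. -/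
def IsDivDiff (k : Type*) [Field k] (n : ℕ) (f : MvPolynomial (Fin (n + 1)) k)
    (j : Fin (n + 1)) (D : MvPolynomial (Fin (n + 1) ⊕ Fin (n + 1)) k) : Prop :=
  D * (X (Sum.inl j) - X (Sum.inr j)) =
    aeval (mixv k n (j : ℕ)) f - aeval (mixv k n ((j : ℕ) + 1)) f

/-- For `f_0,…,f_{n+1}` homogeneous of degree `d ≥ 1`, writing `Δ^i` for
the Bezoutian of `f_0,…,f̂_i,…,f_{n+1}`, one has
`∑_{i=0}^{n+1} (−1)^i Δ^i(x,y)·f_i(x) = ∑_{i=0}^{n+1} (−1)^i Δ^i(x,y)·f_i(y)`. -/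
theorem bezoutian_alternating_sum_identity
    (k : Type*) [Field k] (n : ℕ) (d : ℕ) (hd : 1 ≤ d)
    (f : Fin (n + 2) → MvPolynomial (Fin (n + 1)) k)
    (hf : ∀ i, (f i).IsHomogeneous d)
    (D : Fin (n + 2) →
      Matrix (Fin (n + 1)) (Fin (n + 1)) (MvPolynomial (Fin (n + 1) ⊕ Fin (n + 1)) k))
    (hD : ∀ (i : Fin (n + 2)) (r c : Fin (n + 1)),
      IsDivDiff k n (f (i.succAbove r)) c (D i r c)) :
    ∑ i : Fin (n + 2),
        (-1 : MvPolynomial (Fin (n + 1) ⊕ Fin (n + 1)) k) ^ (i : ℕ) *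
          ((D i).det * aeval (mixv k n 0) (f i)) =
      ∑ i : Fin (n + 2),
        (-1 : MvPolynomial (Fin (n + 1) ⊕ Fin (n + 1)) k) ^ (i : ℕ) *
          ((D i).det * aeval (mixv k n (n + 1)) (f i)) := by
  classical
  have tne : ∀ j : Fin (n + 1), (X (Sum.inl j) - X (Sum.inr j) : MvPolynomial (Fin (n + 1) ⊕ Fin (n + 1)) k) ≠ 0 := by
    intro j
    refine sub_ne_zero.2 fun h => ?_
    have := MvPolynomial.X_injective (R := k) h
    simp at this
  -- canonical divided differences
  set E : Fin (n + 2) → Fin (n + 1) → MvPolynomial (Fin (n + 1) ⊕ Fin (n + 1)) k := fun i c =>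
    if h : (i : ℕ) < n + 1 then D (Fin.last (n + 1)) ⟨i, h⟩ c
    else D 0 ⟨n, n.lt_succ_self⟩ c with hEdef
  have hE : ∀ i c, IsDivDiff k n (f i) c (E i c) := by
    intro i c
    by_cases h : (i : ℕ) < n + 1
    · have hi : (Fin.last (n + 1)).succAbove ⟨(i : ℕ), h⟩ = i := by
        ext; simp [Fin.succAbove_last]
      have := hD (Fin.last (n + 1)) ⟨(i : ℕ), h⟩ c
      rw [hi] at this
      simpa [hEdef, h, Nat.lt_succ_iff.mp h] using this
    · have hi : (0 : Fin (n + 2)).succAbove ⟨n, n.lt_succ_self⟩ = i := by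
        ext; have := i.isLt; simp [Fin.succAbove_zero]; omega
      have := hD 0 ⟨n, n.lt_succ_self⟩ c
      rw [hi] at this
      simp only [hEdef, dif_neg h]; exact this
  have hDE : ∀ (i : Fin (n + 2)) r c, D i r c = E (i.succAbove r) c := fun i r c =>
    mul_right_cancel₀ (tne c) ((hD i r c).trans (hE _ c).symm)
  -- the big matrix
  set N : (Fin (n + 2) → MvPolynomial (Fin (n + 1) ⊕ Fin (n + 1)) k) → Matrix (Fin (n + 2)) (Fin (n + 2)) (MvPolynomial (Fin (n + 1) ⊕ Fin (n + 1)) k) := fun v =>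
    Matrix.of fun i j => Fin.cases (v i) (fun c => E i c) j with hNdef
  have hsub : ∀ (v : Fin (n + 2) → MvPolynomial (Fin (n + 1) ⊕ Fin (n + 1)) k) (i : Fin (n + 2)),
      (N v).submatrix i.succAbove Fin.succ = D i := by
    intro v i
    ext r c
    simp [hNdef, hDE i r c]
  have hdet : ∀ v : Fin (n + 2) → MvPolynomial (Fin (n + 1) ⊕ Fin (n + 1)) k,
      (N v).det = ∑ i : Fin (n + 2), (-1 : MvPolynomial (Fin (n + 1) ⊕ Fin (n + 1)) k) ^ (i : ℕ) * ((D i).det * v i) := by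
    intro v
    rw [Matrix.det_succ_column_zero]
    refine Finset.sum_congr rfl fun i _ => ?_
    rw [hsub]
    have : (N v) i 0 = v i := by simp [hNdef]
    rw [this]; ring
  -- telescoping: x-values minus y-values
  set t : Fin (n + 1) → MvPolynomial (Fin (n + 1) ⊕ Fin (n + 1)) k := fun c => X (Sum.inl c) - X (Sum.inr c) with htdef
  have htel : ∀ i : Fin (n + 2),
      aeval (mixv k n 0) (f i) =
        aeval (mixv k n (n + 1)) (f i) + ∑ c : Fin (n + 1), E i c * t c := by
    intro i
    have : ∑ c : Fin (n + 1), E i c * t c =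
        aeval (mixv k n 0) (f i) - aeval (mixv k n (n + 1)) (f i) := by
      have h1 : ∀ c : Fin (n + 1), E i c * t c =
          aeval (mixv k n (c : ℕ)) (f i) - aeval (mixv k n ((c : ℕ) + 1)) (f i) :=
        fun c => hE i c
      calc ∑ c : Fin (n + 1), E i c * t c
          = ∑ c ∈ Finset.range (n + 1),
            (aeval (mixv k n c) (f i) - aeval (mixv k n (c + 1)) (f i)) := by
            rw [Finset.sum_range fun c => _]
            exact Finset.sum_congr rfl fun c _ => h1 c
        _ = _ := Finset.sum_range_sub' (fun c => aeval (mixv k n c) (f i)) (n + 1)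
    rw [this]; ring
  -- column manipulation
  set vx : Fin (n + 2) → MvPolynomial (Fin (n + 1) ⊕ Fin (n + 1)) k := fun i => aeval (mixv k n 0) (f i) with hvx
  set vy : Fin (n + 2) → MvPolynomial (Fin (n + 1) ⊕ Fin (n + 1)) k := fun i => aeval (mixv k n (n + 1)) (f i) with hvy
  have hNup : ∀ v : Fin (n + 2) → MvPolynomial (Fin (n + 1) ⊕ Fin (n + 1)) k, N v = (N vy).updateCol 0 v := by
    intro v
    ext i j
    induction j using Fin.cases with
    | zero => simp [Matrix.updateCol_apply, hNdef]
    | succ c => simp [Matrix.updateCol_apply, hNdef, (Fin.succ_ne_zero c)]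
  have hdeteq : (N vx).det = (N vy).det := by
    have hsplit : (N vx).det
        = (N vy).det + ((N vy).updateCol 0 fun i => ∑ c : Fin (n + 1), E i c * t c).det := by
      rw [hNup vx]
      have : vx = vy + fun i => ∑ c : Fin (n + 1), E i c * t c := by
        funext i; simpa [hvx, hvy] using htel i
      rw [this, Matrix.det_updateCol_add, ← hNup vy]
    have hzero : ((N vy).updateCol 0 fun i => ∑ c : Fin (n + 1), E i c * t c).det = 0 := by
      set coeff : Fin (n + 2) → MvPolynomial (Fin (n + 1) ⊕ Fin (n + 1)) k := Fin.cases 0 t with hcdef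
      have : (fun i => ∑ c : Fin (n + 1), E i c * t c)
          = fun i => ∑ j : Fin (n + 2), coeff j • (N vy) i j := by
        funext i
        rw [Fin.sum_univ_succ]
        simp [hcdef, hNdef, Fin.sum_univ_succ, mul_comm]
      rw [this, Matrix.det_updateCol_sum]
      simp [hcdef]
    rw [hsplit, hzero, add_zero]
  calc ∑ i : Fin (n + 2), (-1 : MvPolynomial (Fin (n + 1) ⊕ Fin (n + 1)) k) ^ (i : ℕ) * ((D i).det * vx i)
      = (N vx).det := (hdet vx).symm
    _ = (N vy).det := hdeteq
    _ = _ := hdet vy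
end
end

section
/- Let f_0,…,f_{n+1} ∈ S_d be homogeneous of degree d ≥ 1, set ρ = (n+1)(d−1), let a ≥ 0 be an integer, and for each i write Δ^i = ∑_α Δ^i_α(x) y^α for the Bezoutian of f_0,…,f̂_i,…,f_{n+1}. Then for every k-linear functional φ on S_{ρ−a} one has the identity in S_{a+d}: ∑_{i=0}^{n+1} (−1)^i ∑_{|α|=a+d} φ(Δ^i_α · f_i) x^α = ∑_{i=0}^{n+1} (−1)^i ∑_{|α|=a} φ(Δ^i_α) f_i x^α. -/
open MvPolynomial

noncomputable section

/-- Writing `Q ∈ k[x_0,…,x_n,y_0,…,y_n]` as `∑_α Q_α(x) y^α`, this is the coefficient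
`Q_α(x) ∈ k[x_0,…,x_n]` of the monomial `y^α`. -/
def coeffY (k : Type*) [Field k] (n : ℕ) (Q : MvPolynomial (Fin (n + 1) ⊕ Fin (n + 1)) k)
    (α : Fin (n + 1) →₀ ℕ) : MvPolynomial (Fin (n + 1)) k :=
  MvPolynomial.coeff α ((sumAlgEquiv k (Fin (n + 1)) (Fin (n + 1))) (rename Sum.swap Q))

namespace BezAux

variable (k : Type*) [Field k] (n : ℕ)

/-- Move to iterated polynomials, outer variables = `y` (orig. `inr`). -/
def TT : MvPolynomial (Fin (n + 1) ⊕ Fin (n + 1)) k →ₐ[k]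
    MvPolynomial (Fin (n + 1)) (MvPolynomial (Fin (n + 1)) k) :=
  (sumAlgEquiv k (Fin (n + 1)) (Fin (n + 1))).toAlgHom.comp (rename Sum.swap)

lemma coeffY_eq (Q : MvPolynomial (Fin (n + 1) ⊕ Fin (n + 1)) k) (α : Fin (n + 1) →₀ ℕ) :
    coeffY k n Q α = coeff α (TT k n Q) := rfl

lemma TT_rename_inl (g : MvPolynomial (Fin (n + 1)) k) :
    TT k n (rename Sum.inl g) = C g := by
  have h1 : TT k n (rename Sum.inl g)
      = (sumAlgEquiv k (Fin (n + 1)) (Fin (n + 1))) (rename Sum.inr g) := by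
    show (sumAlgEquiv k (Fin (n + 1)) (Fin (n + 1))) (rename Sum.swap (rename Sum.inl g)) = _
    rw [rename_rename]
    rfl
  have h2 := congrArg (fun ψ : MvPolynomial (Fin (n + 1)) k →ₐ[k]
      MvPolynomial (Fin (n + 1)) (MvPolynomial (Fin (n + 1)) k) => ψ g)
    (sumAlgEquiv_comp_rename_inr k (Fin (n + 1)) (Fin (n + 1)))
  simp only [AlgHom.comp_apply, AlgEquiv.toAlgHom_eq_coe, AlgHom.coe_coe,
    IsScalarTower.coe_toAlgHom', MvPolynomial.algebraMap_eq] at h2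
  rw [h1]; exact h2

lemma TT_rename_inr (g : MvPolynomial (Fin (n + 1)) k) :
    TT k n (rename Sum.inr g) = map (C : k →+* MvPolynomial (Fin (n + 1)) k) g := by
  have h1 : TT k n (rename Sum.inr g)
      = (sumAlgEquiv k (Fin (n + 1)) (Fin (n + 1))) (rename Sum.inl g) := by
    show (sumAlgEquiv k (Fin (n + 1)) (Fin (n + 1))) (rename Sum.swap (rename Sum.inr g)) = _
    rw [rename_rename]
    rfl
  have h2 := congrArg (fun ψ : MvPolynomial (Fin (n + 1)) k →ₐ[k]
      MvPolynomial (Fin (n + 1)) (MvPolynomial (Fin (n + 1)) k) => ψ g)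
    (sumAlgEquiv_comp_rename_inl k (Fin (n + 1)) (Fin (n + 1)))
  simp only [AlgHom.comp_apply, AlgEquiv.toAlgHom_eq_coe, AlgHom.coe_coe] at h2
  rw [h1]; refine h2.trans ?_
  rfl

lemma coeffY_mul_inl (Q : MvPolynomial (Fin (n + 1) ⊕ Fin (n + 1)) k)
    (g : MvPolynomial (Fin (n + 1)) k) (α : Fin (n + 1) →₀ ℕ) :
    coeffY k n (Q * rename Sum.inl g) α = coeffY k n Q α * g := by
  rw [coeffY_eq, map_mul, TT_rename_inl, mul_comm, coeff_C_mul, mul_comm, coeffY_eq]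

lemma coeffY_mul_inr (Q : MvPolynomial (Fin (n + 1) ⊕ Fin (n + 1)) k)
    (g : MvPolynomial (Fin (n + 1)) k) (α : Fin (n + 1) →₀ ℕ) :
    coeffY k n (Q * rename Sum.inr g) α
      = ∑ p ∈ Finset.HasAntidiagonal.antidiagonal α, coeff p.2 g • coeffY k n Q p.1 := by
  rw [coeffY_eq, map_mul, TT_rename_inr, coeff_mul]
  refine Finset.sum_congr rfl fun p _ => ?_
  rw [coeff_map, coeffY_eq, smul_eq_C_mul, mul_comm]


def coeffYL (α : Fin (n + 1) →₀ ℕ) :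
    MvPolynomial (Fin (n + 1) ⊕ Fin (n + 1)) k →ₗ[k] MvPolynomial (Fin (n + 1)) k :=
  (LinearMap.restrictScalars k (lcoeff (MvPolynomial (Fin (n + 1)) k) α)) ∘ₗ
    (TT k n).toLinearMap

lemma coeffYL_apply (α : Fin (n + 1) →₀ ℕ) (Q) : coeffYL k n α Q = coeffY k n Q α := rfl

def psi (φ : MvPolynomial (Fin (n + 1)) k →ₗ[k] k) (m : ℕ) :
    MvPolynomial (Fin (n + 1) ⊕ Fin (n + 1)) k →ₗ[k] MvPolynomial (Fin (n + 1)) k :=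
  ∑ β ∈ Finset.Nat.antidiagonalTuple (n + 1) m,
    LinearMap.toSpanSingleton k _ (monomial (Finsupp.equivFunOnFinite.symm β) (1 : k)) ∘ₗ
      (φ ∘ₗ coeffYL k n (Finsupp.equivFunOnFinite.symm β))

lemma psi_apply (φ : MvPolynomial (Fin (n + 1)) k →ₗ[k] k) (m : ℕ) (Q) :
    psi k n φ m Q =
      ∑ β ∈ Finset.Nat.antidiagonalTuple (n + 1) m,
        φ (coeffY k n Q (Finsupp.equivFunOnFinite.symm β)) •
          monomial (Finsupp.equivFunOnFinite.symm β) (1 : k) := by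
  simp [psi, LinearMap.sum_apply, LinearMap.toSpanSingleton_apply, coeffYL_apply]

lemma degree_univ (α : Fin (n + 1) →₀ ℕ) : α.degree = ∑ i, α i :=
  Finset.sum_subset (Finset.subset_univ _)
    (fun i _ hi => Finsupp.notMem_support_iff.mp hi)

lemma degree_add' (x y : Fin (n + 1) →₀ ℕ) : (x + y).degree = x.degree + y.degree := by
  simp [degree_univ, Finsupp.add_apply, Finset.sum_add_distrib]

lemma coeff_psi (φ : MvPolynomial (Fin (n + 1)) k →ₗ[k] k) (m : ℕ) (Q)
    (α : Fin (n + 1) →₀ ℕ) :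
    coeff α (psi k n φ m Q) = if α.degree = m then φ (coeffY k n Q α) else 0 := by
  rw [psi_apply, coeff_sum]
  have : ∀ β ∈ Finset.Nat.antidiagonalTuple (n + 1) m,
      coeff α (φ (coeffY k n Q (Finsupp.equivFunOnFinite.symm β)) •
        monomial (Finsupp.equivFunOnFinite.symm β) (1 : k))
      = if β = Finsupp.equivFunOnFinite α
          then φ (coeffY k n Q (Finsupp.equivFunOnFinite.symm β)) else 0 := by
    intro β _
    rw [coeff_smul, coeff_monomial]
    by_cases h : Finsupp.equivFunOnFinite.symm β = α
    · rw [if_pos h, if_pos (by rw [← h]; simp), smul_eq_mul, mul_one]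
    · rw [if_neg h, if_neg (by intro hh; exact h (by rw [hh]; simp)), smul_eq_mul, mul_zero]
  rw [Finset.sum_congr rfl this, Finset.sum_ite_eq' _ (Finsupp.equivFunOnFinite α)]
  have hmem : (Finsupp.equivFunOnFinite α ∈ Finset.Nat.antidiagonalTuple (n + 1) m)
      ↔ α.degree = m := by
    rw [Finset.Nat.mem_antidiagonalTuple, degree_univ]
    constructor <;> intro h <;> simpa using h
  by_cases h : α.degree = m
  · rw [if_pos (hmem.mpr h), if_pos h]
    simp
  · rw [if_neg (fun hh => h (hmem.mp hh)), if_neg h]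

lemma psi_mul_inr (φ : MvPolynomial (Fin (n + 1)) k →ₗ[k] k) (a d : ℕ)
    (P : MvPolynomial (Fin (n + 1) ⊕ Fin (n + 1)) k)
    (g : MvPolynomial (Fin (n + 1)) k) (hg : g.IsHomogeneous d) :
    psi k n φ (a + d) (P * rename Sum.inr g) = g * psi k n φ a P := by
  ext α
  rw [coeff_psi, coeff_mul]
  have hR : ∀ p ∈ Finset.HasAntidiagonal.antidiagonal α,
      coeff p.1 g * coeff p.2 (psi k n φ a P)
      = coeff p.1 g * (if p.2.degree = a then φ (coeffY k n P p.2) else 0) := by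
    intro p _; rw [coeff_psi]
  rw [Finset.sum_congr rfl hR]
  by_cases hα : α.degree = a + d
  · rw [if_pos hα, coeffY_mul_inr, map_sum]
    refine Finset.sum_equiv (Equiv.prodComm _ _)
      (fun p => Finset.HasAntidiagonal.swap_mem_antidiagonal.symm) (fun p hp => ?_)
    simp only [Equiv.prodComm_apply, Prod.fst_swap, Prod.snd_swap]
    rw [map_smul, smul_eq_mul]
    rw [Finset.HasAntidiagonal.mem_antidiagonal] at hp
    by_cases h2 : p.2.degree = d
    · have h1 : p.1.degree = a := by
        have := degree_add' n p.1 p.2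
        rw [hp, hα, h2] at this
        omega
      simp only [h1, if_true]
    · rw [IsHomogeneous.coeff_eq_zero hg h2, zero_mul, zero_mul]
  · rw [if_neg hα]
    refine (Finset.sum_eq_zero fun p hp => ?_).symm
    rw [Finset.HasAntidiagonal.mem_antidiagonal] at hp
    by_cases h2 : p.2.degree = a
    · have h1 : p.1.degree ≠ d := by
        intro h1
        apply hα
        rw [← hp, degree_add' n, h1, h2]
        omega
      rw [IsHomogeneous.coeff_eq_zero hg h1, zero_mul]
    · rw [if_neg h2, mul_zero]


lemma divDiff_unique {f : MvPolynomial (Fin (n + 1)) k} {c : Fin (n + 1)}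
    {D₁ D₂ : MvPolynomial (Fin (n + 1) ⊕ Fin (n + 1)) k}
    (h₁ : IsDivDiff k n f c D₁) (h₂ : IsDivDiff k n f c D₂) : D₁ = D₂ := by
  have hne : (X (Sum.inl c) - X (Sum.inr c) :
      MvPolynomial (Fin (n + 1) ⊕ Fin (n + 1)) k) ≠ 0 := by
    refine sub_ne_zero.mpr fun h => ?_
    have := X_injective h
    simp at this
  exact mul_right_cancel₀ hne (h₁.trans h₂.symm)

lemma telescope (f : MvPolynomial (Fin (n + 1)) k)
    (E : Fin (n + 1) → MvPolynomial (Fin (n + 1) ⊕ Fin (n + 1)) k)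
    (hE : ∀ c, IsDivDiff k n f c (E c)) :
    rename Sum.inl f
      = rename Sum.inr f + ∑ c : Fin (n + 1), (X (Sum.inl c) - X (Sum.inr c)) * E c := by
  have h0 : aeval (mixv k n 0) f = rename Sum.inl f := by
    have : mixv k n 0 = fun i => X (Sum.inl i) := by
      funext i; simp [mixv]
    rw [this, rename_eq_aeval]; rfl
  have hl : aeval (mixv k n (n + 1)) f = rename Sum.inr f := by
    have : mixv k n (n + 1) = fun i => X (Sum.inr i) := by
      funext i; simp [mixv, i.isLt]
    rw [this, rename_eq_aeval]; rfl
  have hterm : ∀ c : Fin (n + 1), (X (Sum.inl c) - X (Sum.inr c)) * E c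
      = aeval (mixv k n (c : ℕ)) f - aeval (mixv k n ((c : ℕ) + 1)) f := by
    intro c; rw [mul_comm]; exact hE c
  rw [Finset.sum_congr rfl fun c _ => hterm c]
  have : ∑ c : Fin (n + 1), (aeval (mixv k n (c : ℕ)) f - aeval (mixv k n ((c : ℕ) + 1)) f)
      = aeval (mixv k n 0) f - aeval (mixv k n (n + 1)) f := by
    rw [Fin.sum_univ_eq_sum_range (fun j => aeval (mixv k n j) f - aeval (mixv k n (j + 1)) f)]
    exact Finset.sum_range_sub' (fun j => aeval (mixv k n j) f) (n + 1)
  rw [this, h0, hl]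
  ring

lemma star (f : Fin (n + 2) → MvPolynomial (Fin (n + 1)) k)
    (D : Fin (n + 2) →
      Matrix (Fin (n + 1)) (Fin (n + 1)) (MvPolynomial (Fin (n + 1) ⊕ Fin (n + 1)) k))
    (hD : ∀ (i : Fin (n + 2)) (r c : Fin (n + 1)),
      IsDivDiff k n (f (i.succAbove r)) c (D i r c)) :
    ∑ i : Fin (n + 2), (-1 : k) ^ (i : ℕ) • ((D i).det * rename Sum.inl (f i))
      = ∑ i : Fin (n + 2), (-1 : k) ^ (i : ℕ) • ((D i).det * rename Sum.inr (f i)) := by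
  classical
  set E : Fin (n + 2) → Fin (n + 1) → MvPolynomial (Fin (n + 1) ⊕ Fin (n + 1)) k :=
    fun j c => if h : j = 0 then D (Fin.last (n + 1)) 0 c else D 0 (j.pred h) c with hEdef
  have hE : ∀ j c, IsDivDiff k n (f j) c (E j c) := by
    intro j c
    by_cases h : j = 0
    · subst h
      simp only [hEdef, dif_pos]
      have := hD (Fin.last (n + 1)) 0 c
      rwa [Fin.succAbove_last, Fin.castSucc_zero] at this
    · simp only [hEdef, dif_neg h]
      have := hD 0 (j.pred h) c
      rwa [Fin.succAbove_zero, Fin.succ_pred] at this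
  have hDE : ∀ i r c, D i r c = E (i.succAbove r) c := fun i r c =>
    divDiff_unique k n (hD i r c) (hE _ c)
  set M : (Fin (n + 2) → MvPolynomial (Fin (n + 1) ⊕ Fin (n + 1)) k) →
      Matrix (Fin (n + 2)) (Fin (n + 2)) (MvPolynomial (Fin (n + 1) ⊕ Fin (n + 1)) k) :=
    fun v => Matrix.of fun i => Fin.cons (v i) (E i) with hMdef
  have hsub : ∀ v i, ((M v).submatrix i.succAbove Fin.succ) = D i := by
    intro v i
    refine Matrix.ext fun r c => ?_
    simp only [hMdef, Matrix.submatrix_apply, Matrix.of_apply, Fin.cons_succ]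
    exact (hDE i r c).symm
  have hdet : ∀ v, (M v).det
      = ∑ i : Fin (n + 2), (-1 : MvPolynomial (Fin (n + 1) ⊕ Fin (n + 1)) k) ^ (i : ℕ)
          * v i * (D i).det := by
    intro v
    rw [Matrix.det_succ_column_zero]
    refine Finset.sum_congr rfl fun i _ => ?_
    rw [hsub v i]
    simp only [hMdef, Matrix.of_apply, Fin.cons_zero]
  have key : (M fun i => rename Sum.inl (f i)).det = (M fun i => rename Sum.inr (f i)).det := by
    set A := M fun i => rename Sum.inr (f i) with hA
    set cf : Fin (n + 2) → MvPolynomial (Fin (n + 1) ⊕ Fin (n + 1)) k :=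
      Fin.cons 1 (fun j => X (Sum.inl j) - X (Sum.inr j)) with hcf
    have h1 : (M fun i => rename Sum.inl (f i))
        = A.updateCol 0 (fun r => ∑ j, cf j • A r j) := by
      refine Matrix.ext fun r c => ?_
      rw [Matrix.updateCol_apply]
      by_cases hc : c = 0
      · subst hc
        rw [if_pos rfl]
        have : ∑ j, cf j • A r j
            = cf 0 • A r 0 + ∑ j : Fin (n + 1), cf j.succ • A r j.succ :=
          Fin.sum_univ_succ _
        rw [this]
        simp only [hcf, hA, hMdef, Fin.cons_zero, Fin.cons_succ, Matrix.of_apply,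
          one_smul, smul_eq_mul, one_mul]
        exact telescope k n (f r) (E r) (hE r)
      · rw [if_neg hc]
        obtain ⟨j, rfl⟩ := Fin.exists_succ_eq.mpr hc
        simp only [hMdef, hA, Matrix.of_apply, Fin.cons_succ]
    rw [h1, Matrix.det_updateCol_sum]
    simp only [hcf, Fin.cons_zero, one_smul]
  have hsm : ∀ (c : ℕ) (Q : MvPolynomial (Fin (n + 1) ⊕ Fin (n + 1)) k),
      ((-1 : k) ^ c) • Q = (-1 : MvPolynomial (Fin (n + 1) ⊕ Fin (n + 1)) k) ^ c * Q := by
    intro c Q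
    rw [Algebra.smul_def, map_pow, map_neg, map_one]
  have hx := hdet fun i => rename Sum.inl (f i)
  have hy := hdet fun i => rename Sum.inr (f i)
  calc ∑ i : Fin (n + 2), (-1 : k) ^ (i : ℕ) • ((D i).det * rename Sum.inl (f i))
      = ∑ i : Fin (n + 2), (-1 : MvPolynomial (Fin (n + 1) ⊕ Fin (n + 1)) k) ^ (i : ℕ)
          * rename Sum.inl (f i) * (D i).det := by
        refine Finset.sum_congr rfl fun i _ => ?_
        rw [hsm]; ring
    _ = (M fun i => rename Sum.inl (f i)).det := hx.symm
    _ = (M fun i => rename Sum.inr (f i)).det := key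
    _ = ∑ i : Fin (n + 2), (-1 : MvPolynomial (Fin (n + 1) ⊕ Fin (n + 1)) k) ^ (i : ℕ)
          * rename Sum.inr (f i) * (D i).det := hy
    _ = ∑ i : Fin (n + 2), (-1 : k) ^ (i : ℕ) • ((D i).det * rename Sum.inr (f i)) := by
        refine Finset.sum_congr rfl fun i _ => ?_
        rw [hsm]; ring

end BezAux

/-- For `f_0,…,f_{n+1} ∈ S_d`, `ρ = (n+1)(d−1)`, `a ≥ 0`, and any
`k`-linear functional `φ` (on `S_{ρ−a}`), writing `Δ^i = ∑_α Δ^i_α(x) y^α` for the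
Bezoutian omitting `f_i`, one has the identity in `S_{a+d}`:
`∑_i (−1)^i ∑_{|α|=a+d} φ(Δ^i_α f_i) x^α = ∑_i (−1)^i ∑_{|α|=a} φ(Δ^i_α) f_i x^α`. -/
theorem bezoutian_functional_identity
    (k : Type*) [Field k] (n : ℕ) (d : ℕ) (hd : 1 ≤ d) (a : ℕ)
    (f : Fin (n + 2) → MvPolynomial (Fin (n + 1)) k)
    (hf : ∀ i, (f i).IsHomogeneous d)
    (D : Fin (n + 2) →
      Matrix (Fin (n + 1)) (Fin (n + 1)) (MvPolynomial (Fin (n + 1) ⊕ Fin (n + 1)) k))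
    (hD : ∀ (i : Fin (n + 2)) (r c : Fin (n + 1)),
      IsDivDiff k n (f (i.succAbove r)) c (D i r c))
    (φ : MvPolynomial (Fin (n + 1)) k →ₗ[k] k) :
    ∑ i : Fin (n + 2), (-1 : k) ^ (i : ℕ) •
        ∑ β ∈ Finset.Nat.antidiagonalTuple (n + 1) (a + d),
          φ (coeffY k n (D i).det (Finsupp.equivFunOnFinite.symm β) * f i) •
            monomial (Finsupp.equivFunOnFinite.symm β) (1 : k) =
      ∑ i : Fin (n + 2), (-1 : k) ^ (i : ℕ) •
        ∑ β ∈ Finset.Nat.antidiagonalTuple (n + 1) a,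
          φ (coeffY k n (D i).det (Finsupp.equivFunOnFinite.symm β)) •
            (f i * monomial (Finsupp.equivFunOnFinite.symm β) (1 : k)) := by
  classical
  have L1 : ∀ i : Fin (n + 2),
      (∑ β ∈ Finset.Nat.antidiagonalTuple (n + 1) (a + d),
        φ (coeffY k n (D i).det (Finsupp.equivFunOnFinite.symm β) * f i) •
          monomial (Finsupp.equivFunOnFinite.symm β) (1 : k))
      = BezAux.psi k n φ (a + d) ((D i).det * rename Sum.inl (f i)) := by
    intro i
    rw [BezAux.psi_apply]
    exact Finset.sum_congr rfl fun β _ => by rw [BezAux.coeffY_mul_inl]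
  have L2 : ∀ i : Fin (n + 2),
      (∑ β ∈ Finset.Nat.antidiagonalTuple (n + 1) a,
        φ (coeffY k n (D i).det (Finsupp.equivFunOnFinite.symm β)) •
          (f i * monomial (Finsupp.equivFunOnFinite.symm β) (1 : k)))
      = f i * BezAux.psi k n φ a ((D i).det) := by
    intro i
    rw [BezAux.psi_apply, Finset.mul_sum]
    exact Finset.sum_congr rfl fun β _ => (mul_smul_comm _ _ _).symm
  have L3 : ∀ i : Fin (n + 2), f i * BezAux.psi k n φ a ((D i).det)
      = BezAux.psi k n φ (a + d) ((D i).det * rename Sum.inr (f i)) :=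
    fun i => (BezAux.psi_mul_inr k n φ a d _ _ (hf i)).symm
  simp only [L1, L2, L3]
  have hstar := BezAux.star k n f D hD
  calc ∑ i : Fin (n + 2), (-1 : k) ^ (i : ℕ) •
        BezAux.psi k n φ (a + d) ((D i).det * rename Sum.inl (f i))
      = BezAux.psi k n φ (a + d)
          (∑ i : Fin (n + 2), (-1 : k) ^ (i : ℕ) • ((D i).det * rename Sum.inl (f i))) := by
        rw [map_sum]
        simp_rw [map_smul]
    _ = BezAux.psi k n φ (a + d)
          (∑ i : Fin (n + 2), (-1 : k) ^ (i : ℕ) • ((D i).det * rename Sum.inr (f i))) := by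
        rw [hstar]
    _ = ∑ i : Fin (n + 2), (-1 : k) ^ (i : ℕ) •
          BezAux.psi k n φ (a + d) ((D i).det * rename Sum.inr (f i)) := by
        rw [map_sum]
        simp_rw [map_smul]
end
end

section
/- The Bezoutian of the monomials x_0^d, …, x_n^d equals ∑_{β ≤ (d−1,…,d−1)} x^β y^{(d−1,…,d−1)−β}, where the sum is over all exponent vectors β ∈ ℕ^{n+1} with every component of β at most d−1. -/
/-! The divided differences of `x_i ^ d` form a diagonal matrix: `x_i ^ d` does not involve
the variable `x_j` for `i ≠ j`, so its `j`-th divided difference vanishes, while the `i`-th one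
is the quotient `(x_i ^ d - y_i ^ d) / (x_i - y_i) = ∑_{b < d} x_i ^ b y_i ^ (d - 1 - b)`.
The Bezoutian is the product of these geometric sums, which expands to the claimed sum. -/

open MvPolynomial

noncomputable section

theorem X_inl_sub_X_inr_ne_zero {R σ : Type*} [CommRing R] [Nontrivial R] (j : σ) :
    (X (Sum.inl j) - X (Sum.inr j) : MvPolynomial (σ ⊕ σ) R) ≠ 0 :=
  sub_ne_zero.mpr fun h => Sum.inl_ne_inr (X_injective h)

section DivDiff

variable {k : Type*} [Field k] {n : ℕ}

theorem mixv_self (j : Fin (n + 1)) : mixv k n j j = X (Sum.inl j) := by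
  simp [mixv]

theorem mixv_succ_self (j : Fin (n + 1)) : mixv k n (j + 1) j = X (Sum.inr j) := by
  simp [mixv]

theorem mixv_succ_of_ne {i j : Fin (n + 1)} (hij : i ≠ j) :
    mixv k n (j + 1) i = mixv k n j i := by
  have hij' : (i : ℕ) ≠ j := Fin.val_ne_of_ne hij
  simp only [mixv, Nat.lt_succ_iff_lt_or_eq, hij', or_false]

theorem IsDivDiff.unique {f : MvPolynomial (Fin (n + 1)) k} {j : Fin (n + 1)}
    {D D' : MvPolynomial (Fin (n + 1) ⊕ Fin (n + 1)) k}
    (hD : IsDivDiff k n f j D) (hD' : IsDivDiff k n f j D') : D = D' :=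
  mul_right_cancel₀ (X_inl_sub_X_inr_ne_zero j) (hD.trans hD'.symm)

theorem isDivDiff_X_pow_self (j : Fin (n + 1)) (d : ℕ) :
    IsDivDiff k n (X j ^ d) j
      (∑ b ∈ Finset.range d, X (Sum.inl j) ^ b * X (Sum.inr j) ^ (d - 1 - b)) := by
  rw [IsDivDiff, map_pow, map_pow, aeval_X, aeval_X, mixv_self, mixv_succ_self]
  exact geom_sum₂_mul _ _ d

theorem isDivDiff_X_pow_of_ne {i j : Fin (n + 1)} (hij : i ≠ j) (d : ℕ) :
    IsDivDiff k n (X i ^ d) j 0 := by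
  rw [IsDivDiff, map_pow, map_pow, aeval_X, aeval_X, mixv_succ_of_ne hij, sub_self, zero_mul]

end DivDiff

theorem bezoutian_of_powers_general
    (k : Type*) [Field k] (n : ℕ) (d : ℕ)
    (D : Matrix (Fin (n + 1)) (Fin (n + 1)) (MvPolynomial (Fin (n + 1) ⊕ Fin (n + 1)) k))
    (hD : ∀ i j, IsDivDiff k n ((X i : MvPolynomial (Fin (n + 1)) k) ^ d) j (D i j)) :
    D.det =
      ∑ β ∈ Fintype.piFinset (fun _ : Fin (n + 1) => Finset.range d),
        ∏ i : Fin (n + 1),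
          X (Sum.inl i) ^ (β i) * X (Sum.inr i) ^ (d - 1 - β i) := by
  have hdiag : D = Matrix.diagonal fun j =>
      ∑ b ∈ Finset.range d, X (Sum.inl j) ^ b * X (Sum.inr j) ^ (d - 1 - b) := by
    ext i j : 1
    by_cases hij : i = j
    · subst hij
      rw [Matrix.diagonal_apply_eq]
      exact (hD i i).unique (isDivDiff_X_pow_self i d)
    · rw [Matrix.diagonal_apply_ne _ hij]
      exact (hD i j).unique (isDivDiff_X_pow_of_ne hij d)
  rw [hdiag, Matrix.det_diagonal, Finset.prod_univ_sum]

/-- The Bezoutian of `x_0^d, …, x_n^d` equals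
`∑_{β ≤ (d−1,…,d−1)} x^β y^{(d−1,…,d−1)−β}`, the sum being over all exponent vectors
`β` with every component at most `d−1`. -/
theorem bezoutian_of_powers
    (k : Type*) [Field k] (n : ℕ) (d : ℕ) (hd : 1 ≤ d)
    (D : Matrix (Fin (n + 1)) (Fin (n + 1)) (MvPolynomial (Fin (n + 1) ⊕ Fin (n + 1)) k))
    (hD : ∀ i j, IsDivDiff k n ((X i : MvPolynomial (Fin (n + 1)) k) ^ d) j (D i j)) :
    D.det =
      ∑ β ∈ Fintype.piFinset (fun _ : Fin (n + 1) => Finset.range d),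
        ∏ i : Fin (n + 1),
          X (Sum.inl i) ^ (β i) * X (Sum.inr i) ^ (d - 1 - β i) :=
  bezoutian_of_powers_general k n d D hD
end
end

section
/- Let f_0,…,f_{n+1} ∈ S_d (d ≥ 1) be homogeneous of degree d, let I = (f_0,…,f_{n+1}), set ρ = (n+1)(d−1), fix a ≥ 0, and for each i write Δ^i = ∑_α Δ^i_α(x) y^α for the Bezoutian of f_0,…,f̂_i,…,f_{n+1}. Then for every k-linear functional φ on S_{ρ−a} that vanishes on I_{ρ−a} = I ∩ S_{ρ−a}, the tuple of polynomials A_i = (−1)^i ∑_{|α|=a} φ(Δ^i_α) x^α (0 ≤ i ≤ n+1) is a syzygy: ∑_{i=0}^{n+1} A_i f_i = 0 in S_{a+d}. -/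
open MvPolynomial

noncomputable section

/-- The `ℤ`-indexed graded piece `S_m ⊆ S = k[x_0,…,x_n]` (zero in negative degrees). -/
def gradedPiece (k : Type*) [Field k] (n : ℕ) (m : ℤ) :
    Submodule k (MvPolynomial (Fin (n + 1)) k) :=
  if 0 ≤ m then homogeneousSubmodule (Fin (n + 1)) k m.toNat else ⊥

/-! ### Auxiliary lemmas -/

section Aux

open Finset

lemma Finsupp.degree_eq_sum_univ {σ : Type*} [Fintype σ] (f : σ →₀ ℕ) :
    f.degree = ∑ i, f i := by
  rw [Finsupp.degree]
  exact Finset.sum_subset (Finset.subset_univ _)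
    (fun x _ hx => Finsupp.notMem_support_iff.mp hx)

lemma degree_sumElim' {σ τ : Type*} [Fintype σ] [Fintype τ] (α : σ →₀ ℕ) (γ : τ →₀ ℕ) :
    (Finsupp.sumElim α γ).degree = α.degree + γ.degree := by
  simp only [Finsupp.degree_eq_sum_univ, Fintype.sum_sum_type, Finsupp.sumElim_apply,
    Sum.elim_inl, Sum.elim_inr]

lemma Finsupp.sumElim_eq_zero_iff' {α β M : Type*} [Zero M] (f : α →₀ M) (g : β →₀ M) :
    Finsupp.sumElim f g = 0 ↔ f = 0 ∧ g = 0 := by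
  constructor
  · intro h
    constructor
    · ext x; simpa using DFunLike.congr_fun h (Sum.inl x)
    · ext x; simpa using DFunLike.congr_fun h (Sum.inr x)
  · rintro ⟨rfl, rfl⟩
    ext s; cases s <;> simp

lemma sumElim_sub_single_inl {σ τ : Type*} [DecidableEq σ] [DecidableEq τ]
    (α : σ →₀ ℕ) (γ : τ →₀ ℕ) (s : σ) :
    Finsupp.sumElim α γ - Finsupp.single (Sum.inl s) 1
      = Finsupp.sumElim (α - Finsupp.single s 1) γ := by
  ext x
  cases x with
  | inl x => simp [Finsupp.tsub_apply, Finsupp.single_apply, Sum.inl.injEq]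
  | inr x => simp [Finsupp.tsub_apply, Finsupp.single_apply]

lemma sumElim_sub_single_inr {σ τ : Type*} [DecidableEq σ] [DecidableEq τ]
    (α : σ →₀ ℕ) (γ : τ →₀ ℕ) (s : τ) :
    Finsupp.sumElim α γ - Finsupp.single (Sum.inr s) 1
      = Finsupp.sumElim α (γ - Finsupp.single s 1) := by
  ext x
  cases x with
  | inl x => simp [Finsupp.tsub_apply, Finsupp.single_apply]
  | inr x => simp [Finsupp.tsub_apply, Finsupp.single_apply, Sum.inr.injEq]

lemma coeff_coeff_sumAlgEquiv {R : Type*} [CommSemiring R] {σ τ : Type*}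
    (Q : MvPolynomial (σ ⊕ τ) R) (α : σ →₀ ℕ) (γ : τ →₀ ℕ) :
    coeff γ (coeff α (sumAlgEquiv R σ τ Q)) = coeff (Finsupp.sumElim α γ) Q := by
  classical
  have key : ∀ Q : MvPolynomial (σ ⊕ τ) R, ∀ α γ,
      coeff γ (coeff α (sumToIter R σ τ Q)) = coeff (Finsupp.sumElim α γ) Q := by
    intro Q
    induction Q using MvPolynomial.induction_on with
    | C a =>
      intro α γ
      rw [sumToIter_C]
      rw [coeff_C]
      by_cases hα : (0 : σ →₀ ℕ) = α
      · subst hα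
        rw [if_pos rfl, coeff_C]
        by_cases hγ : (0 : τ →₀ ℕ) = γ
        · subst hγ
          rw [if_pos rfl, (Finsupp.sumElim_eq_zero_iff' (0 : σ →₀ ℕ) (0 : τ →₀ ℕ)).mpr ⟨rfl, rfl⟩,
            coeff_C, if_pos rfl]
        · rw [if_neg hγ, coeff_C,
            if_neg (fun h => hγ ((Finsupp.sumElim_eq_zero_iff' _ _).mp h.symm).2.symm)]
      · rw [if_neg hα, coeff_zero, coeff_C,
          if_neg (fun h => hα ((Finsupp.sumElim_eq_zero_iff' _ _).mp h.symm).1.symm)]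
    | add p q hp hq =>
      intro α γ
      simp [map_add, coeff_add, hp, hq]
    | mul_X p s hp =>
      intro α γ
      cases s with
      | inl s =>
        rw [map_mul, sumToIter_Xl, coeff_mul_X', coeff_mul_X']
        have hmem : Sum.inl s ∈ (Finsupp.sumElim α γ).support ↔ s ∈ α.support := by
          simp [Finsupp.mem_support_iff]
        rw [sumElim_sub_single_inl]
        split_ifs with h1 h2 h2
        · exact hp _ _
        · exact absurd (hmem.mpr h1) h2
        · exact absurd (hmem.mp h2) h1
        · simp
      | inr s =>
        rw [map_mul, sumToIter_Xr, mul_comm _ (C (X s)), coeff_C_mul,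
          mul_comm (X s) _, coeff_mul_X', coeff_mul_X']
        have hmem : Sum.inr s ∈ (Finsupp.sumElim α γ).support ↔ s ∈ γ.support := by
          simp [Finsupp.mem_support_iff]
        rw [sumElim_sub_single_inr]
        split_ifs with h1 h2 h2
        · exact hp _ _
        · exact absurd (hmem.mpr h1) h2
        · exact absurd (hmem.mp h2) h1
        · simp
  have e : (sumAlgEquiv R σ τ).toRingHom = sumToIter R σ τ := by
    apply MvPolynomial.ringHom_ext
    · intro r; simp [sumToIter_C]
    · intro i; cases i <;> simp [sumToIter_Xl, sumToIter_Xr]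
  rw [show sumAlgEquiv R σ τ Q = sumToIter R σ τ Q from RingHom.congr_fun e Q]
  exact key Q α γ

/-- homogeneous component of a product with a homogeneous polynomial on the right. -/
lemma homogeneousComponent_mul_homogeneous {k : Type*} [CommRing k] {σ : Type*}
    {q : MvPolynomial σ k} {e : ℕ} (hq : q.IsHomogeneous e) (t : ℕ) (p : MvPolynomial σ k) :
    homogeneousComponent t (p * q) =
      if e ≤ t then homogeneousComponent (t - e) p * q else 0 := by
  induction p using MvPolynomial.induction_on' with
  | monomial β c =>
    have h1 : ((monomial β) c * q).IsHomogeneous (β.degree + e) :=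
      (isHomogeneous_monomial c rfl).mul hq
    rw [homogeneousComponent_of_mem ((mem_homogeneousSubmodule _ _).mpr h1),
      homogeneousComponent_of_mem ((mem_homogeneousSubmodule _ _).mpr
        (isHomogeneous_monomial c rfl))]
    by_cases het : e ≤ t
    · rw [if_pos het]
      by_cases h : t = β.degree + e
      · rw [if_pos h, if_pos (show t - e = β.degree by omega)]
      · rw [if_neg h, if_neg (show ¬ t - e = β.degree by omega), zero_mul]
    · rw [if_neg het, if_neg (show ¬ t = β.degree + e by omega)]
  | add p1 p2 hp1 hp2 =>
    rw [add_mul, map_add, hp1, hp2, map_add]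
    split_ifs
    · rw [add_mul]
    · rw [add_zero]

lemma isHomogeneous_of_mul_homogeneous_one {k : Type*} [Field k] {σ : Type*}
    {p g : MvPolynomial σ k} (hg : g.IsHomogeneous 1) (hg0 : g ≠ 0) {m : ℕ}
    (h : (p * g).IsHomogeneous (m + 1)) : p.IsHomogeneous m := by
  have hcomp : ∀ t : ℕ, t ≠ m → homogeneousComponent t p = 0 := by
    intro t ht
    have h1 : homogeneousComponent (t + 1) (p * g) = homogeneousComponent t p * g := by
      rw [homogeneousComponent_mul_homogeneous hg, if_pos (by omega)]
      simp
    have h2 : homogeneousComponent (t + 1) (p * g) = 0 := by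
      rw [homogeneousComponent_of_mem ((mem_homogeneousSubmodule _ _).mpr h),
        if_neg (show ¬ t + 1 = m + 1 by omega)]
    rw [h2] at h1
    exact (mul_eq_zero.mp h1.symm).resolve_right hg0
  intro δ hδ
  by_contra hne
  have hdm : δ.degree ≠ m := by
    intro hh
    exact hne (by rw [Pi.one_def, ← Finsupp.degree_eq_weight_one]; exact hh)
  have h0 := hcomp δ.degree hdm
  have hc := coeff_homogeneousComponent (σ := σ) (R := k) (n := δ.degree) (φ := p) δ
  rw [h0, coeff_zero, if_pos rfl] at hc
  exact hδ hc.symm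

lemma det_mvPolynomial_isHomogeneous {k : Type*} [CommRing k] {σ : Type*} {N e : ℕ}
    (M : Matrix (Fin N) (Fin N) (MvPolynomial σ k))
    (h : ∀ r c, (M r c).IsHomogeneous e) : M.det.IsHomogeneous (N * e) := by
  rw [Matrix.det_apply]
  apply IsHomogeneous.sum
  intro σp _
  have hprod : (∏ i, M (σp i) i).IsHomogeneous (N * e) := by
    have := IsHomogeneous.prod Finset.univ (fun i => M (σp i) i) (fun _ => e)
      (fun i _ => h _ _)
    simpa [Finset.sum_const, Finset.card_univ, mul_comm] using this
  rcases Int.units_eq_one_or (Equiv.Perm.sign σp) with hs | hs <;> rw [hs]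
  · simpa using hprod
  · simpa [Units.smul_def] using hprod.neg

variable {R : Type*} [CommRing R] {N : ℕ}

/-- The square matrix whose first row is `v` and whose later rows are given by `w`. -/
def consMat (v : Fin (N + 2) → R) (w : Fin (N + 1) → Fin (N + 2) → R) :
    Matrix (Fin (N + 2)) (Fin (N + 2)) R :=
  Matrix.of (Fin.cons (α := fun _ => Fin (N + 2) → R) v w)

lemma consMat_zero (v : Fin (N + 2) → R) (w : Fin (N + 1) → Fin (N + 2) → R)
    (j : Fin (N + 2)) : consMat v w 0 j = v j := rfl

lemma consMat_succ (v : Fin (N + 2) → R) (w : Fin (N + 1) → Fin (N + 2) → R)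
    (r : Fin (N + 1)) (j : Fin (N + 2)) : consMat v w r.succ j = w r j := by
  show Fin.cons (α := fun _ => Fin (N + 2) → R) v w r.succ j = w r j
  rw [Fin.cons_succ]

lemma updateRow_consMat_zero (v v' : Fin (N + 2) → R) (w : Fin (N + 1) → Fin (N + 2) → R) :
    (consMat v w).updateRow 0 v' = consMat v' w := by
  ext i j
  refine Fin.cases ?_ (fun r => ?_) i
  · rw [Matrix.updateRow_self]; rw [consMat_zero]
  · rw [Matrix.updateRow_ne (Fin.succ_ne_zero r), consMat_succ, consMat_succ]

lemma det_consMat_expand (v : Fin (N + 2) → R) (w : Fin (N + 1) → Fin (N + 2) → R) :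
    (consMat v w).det =
      ∑ j : Fin (N + 2), (-1 : R) ^ (j : ℕ) * v j *
        (Matrix.of (fun r c => w r (j.succAbove c)) : Matrix (Fin (N + 1)) (Fin (N + 1)) R).det := by
  rw [Matrix.det_succ_row_zero]
  refine Finset.sum_congr rfl fun j _ => ?_
  rw [consMat_zero]
  congr 1

lemma det_consMat_eq_of_diff (vx vy : Fin (N + 2) → R) (w : Fin (N + 1) → Fin (N + 2) → R)
    (s : Fin (N + 1) → R) (hdiff : ∀ i, vx i - vy i = ∑ c, s c * w c i) :
    (consMat vx w).det = (consMat vy w).det := by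
  set M : Matrix (Fin (N + 2)) (Fin (N + 2)) R := consMat vy w with hM
  set c' : Fin (N + 2) → R := Fin.cons 0 s with hc'
  have hz : vx = vy + ∑ j : Fin (N + 2), c' j • M j := by
    funext i
    rw [Pi.add_apply]
    have h1 : (∑ j : Fin (N + 2), c' j • M j) i = ∑ c : Fin (N + 1), s c * w c i := by
      rw [Finset.sum_apply, Fin.sum_univ_succ]
      have hc0 : c' 0 = 0 := rfl
      rw [hc0, zero_smul, Pi.zero_apply, zero_add]
      refine Finset.sum_congr rfl fun c _ => ?_
      have hcs : c' c.succ = s c := by rw [hc', Fin.cons_succ]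
      rw [hcs, Pi.smul_apply, smul_eq_mul, hM, consMat_succ]
    rw [h1, ← hdiff i]
    ring
  have key : consMat vx w = M.updateRow 0 (M 0 + ∑ j, c' j • M j) := by
    have h0 : M 0 = vy := rfl
    rw [h0, ← hz, hM, updateRow_consMat_zero]
  rw [key, Matrix.det_updateRow_add, Matrix.updateRow_eq_self, Matrix.det_updateRow_sum]
  have hc0 : c' 0 = 0 := rfl
  rw [hc0, zero_smul, add_zero]

/-- Joint homogeneity of `Q` controls the degrees of the `y`-expansion coefficients. -/
lemma coeffY_degree_add {k : Type*} [Field k] {n ρ : ℕ}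
    {Q : MvPolynomial (Fin (n + 1) ⊕ Fin (n + 1)) k} (hQ : Q.IsHomogeneous ρ)
    (γ δ : Fin (n + 1) →₀ ℕ) (hne : coeff δ (coeffY k n Q γ) ≠ 0) :
    δ.degree + γ.degree = ρ := by
  rw [coeffY, coeff_coeff_sumAlgEquiv] at hne
  have hQ' : (rename Sum.swap Q).IsHomogeneous ρ := hQ.rename_isHomogeneous
  have hw := hQ' hne
  rw [Pi.one_def, ← Finsupp.degree_eq_weight_one] at hw
  rw [degree_sumElim'] at hw
  omega

lemma coeffY_isHomogeneous {k : Type*} [Field k] {n ρ : ℕ}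
    {Q : MvPolynomial (Fin (n + 1) ⊕ Fin (n + 1)) k} (hQ : Q.IsHomogeneous ρ)
    (γ : Fin (n + 1) →₀ ℕ) : (coeffY k n Q γ).IsHomogeneous (ρ - γ.degree) := by
  intro δ hδ
  rw [Pi.one_def, ← Finsupp.degree_eq_weight_one]
  have := coeffY_degree_add hQ γ δ hδ
  omega

lemma coeffY_homogeneousComponent_eq_zero {k : Type*} [Field k] {n ρ a : ℕ}
    {Q : MvPolynomial (Fin (n + 1) ⊕ Fin (n + 1)) k} (hQ : Q.IsHomogeneous ρ)
    (γ : Fin (n + 1) →₀ ℕ) (ha : a ≤ ρ) (hγ : γ.degree ≠ a) :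
    homogeneousComponent (ρ - a) (coeffY k n Q γ) = 0 := by
  apply homogeneousComponent_eq_zero'
  intro δ hδ
  have := coeffY_degree_add hQ γ δ (MvPolynomial.mem_support_iff.mp hδ)
  omega

end Aux

/-- For `f_0,…,f_{n+1} ∈ S_d`, `I = (f_0,…,f_{n+1})`, `ρ = (n+1)(d−1)`,
`a ≥ 0` and any functional `φ` on `S_{ρ−a}` vanishing on `I_{ρ−a}`, the "Bezout" tuple
`A_i = (−1)^i ∑_{|α|=a} φ(Δ^i_α) x^α` is a syzygy: `∑ A_i f_i = 0`. -/
theorem bezout_syzygy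
    (k : Type*) [Field k] (n : ℕ) (d : ℕ) (hd : 1 ≤ d) (a : ℕ)
    (f : Fin (n + 2) → MvPolynomial (Fin (n + 1)) k)
    (hf : ∀ i, (f i).IsHomogeneous d)
    (D : Fin (n + 2) →
      Matrix (Fin (n + 1)) (Fin (n + 1)) (MvPolynomial (Fin (n + 1) ⊕ Fin (n + 1)) k))
    (hD : ∀ (i : Fin (n + 2)) (r c : Fin (n + 1)),
      IsDivDiff k n (f (i.succAbove r)) c (D i r c))
    (φ : Module.Dual k ↥(gradedPiece k n (((n + 1) * (d - 1) : ℤ) - a)))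
    (hφ : ∀ x : ↥(gradedPiece k n (((n + 1) * (d - 1) : ℤ) - a)),
      (x : MvPolynomial (Fin (n + 1)) k) ∈ Ideal.span (Set.range f) → φ x = 0)
    (u : Fin (n + 2) → (Fin (n + 1) → ℕ) →
      ↥(gradedPiece k n (((n + 1) * (d - 1) : ℤ) - a)))
    (hu : ∀ (i : Fin (n + 2)), ∀ β ∈ Finset.Nat.antidiagonalTuple (n + 1) a,
      (u i β : MvPolynomial (Fin (n + 1)) k) =
        coeffY k n (D i).det (Finsupp.equivFunOnFinite.symm β)) :
    ∑ i : Fin (n + 2),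
      ((-1 : k) ^ (i : ℕ) •
        ∑ β ∈ Finset.Nat.antidiagonalTuple (n + 1) a,
          φ (u i β) • monomial (Finsupp.equivFunOnFinite.symm β) (1 : k)) * f i = 0 := by
  classical
  set ρℕ : ℕ := (n + 1) * (d - 1) with hρ
  have hcast : (((n : ℤ) + 1) * ((d : ℤ) - 1)) = ((ρℕ : ℕ) : ℤ) := by
    rw [hρ, Nat.cast_mul, Nat.cast_sub hd]
    push_cast
    ring
  by_cases haρ : a ≤ ρℕ
  case neg =>
    -- the graded piece is `⊥`, so `φ` kills everything
    have hbot : gradedPiece k n (((n + 1) * (d - 1) : ℤ) - a) = ⊥ := by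
      unfold gradedPiece
      rw [if_neg]
      rw [hcast]
      omega
    have hφ0 : ∀ (i : Fin (n + 2)) (β : Fin (n + 1) → ℕ), φ (u i β) = 0 := by
      intro i β
      have h : ((u i β : MvPolynomial (Fin (n + 1)) k)) ∈ (⊥ : Submodule k _) :=
        hbot.le (u i β).2
      rw [Submodule.mem_bot] at h
      have hz : u i β = 0 := by
        apply Subtype.ext
        rw [ZeroMemClass.coe_zero]
        exact h
      rw [hz, map_zero]
    simp [hφ0]
  case pos =>
    set t : ℕ := ρℕ - a with ht
    have hm' : (((n : ℤ) + 1) * ((d : ℤ) - 1) - (a : ℤ)) = ((ρℕ : ℤ) - (a : ℤ)) := by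
      rw [hcast]
    have hgp : gradedPiece k n (((n + 1) * (d - 1) : ℤ) - a)
        = homogeneousSubmodule (Fin (n + 1)) k t := by
      unfold gradedPiece
      rw [if_pos (by rw [hm']; omega)]
      congr 1
      rw [hm']
      omega
    -- the truncated functional
    have hmem : ∀ p : MvPolynomial (Fin (n + 1)) k,
        homogeneousComponent t p ∈ gradedPiece k n (((n + 1) * (d - 1) : ℤ) - a) := by
      intro p
      rw [hgp]
      exact homogeneousComponent_mem t p
    set φt : MvPolynomial (Fin (n + 1)) k →ₗ[k] k :=
      φ ∘ₗ LinearMap.codRestrict _ (homogeneousComponent t) hmem with hφt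
    have φt_apply : ∀ p, φt p = φ ⟨homogeneousComponent t p, hmem p⟩ := fun p => rfl
    have φt_of_hom : ∀ {p : MvPolynomial (Fin (n + 1)) k} (hp : p.IsHomogeneous t)
        (hp' : p ∈ gradedPiece k n (((n + 1) * (d - 1) : ℤ) - a)), φt p = φ ⟨p, hp'⟩ := by
      intro p hp hp'
      rw [φt_apply]
      congr 1
      apply Subtype.ext
      show homogeneousComponent t p = p
      rw [homogeneousComponent_of_mem ((mem_homogeneousSubmodule _ _).mpr hp), if_pos rfl]
    have φt_mul_f : ∀ (j : Fin (n + 2)) (q : MvPolynomial (Fin (n + 1)) k),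
        φt (f j * q) = 0 := by
      intro j q
      rw [φt_apply]
      apply hφ
      show homogeneousComponent t (f j * q) ∈ _
      rw [mul_comm, homogeneousComponent_mul_homogeneous (hf j)]
      split_ifs
      · exact Ideal.mul_mem_left _ _ (Ideal.subset_span ⟨j, rfl⟩)
      · exact Ideal.zero_mem _
    -- the "apply φt to x-coefficients" map Ψ
    set Ψ : MvPolynomial (Fin (n + 1) ⊕ Fin (n + 1)) k →ₗ[k] MvPolynomial (Fin (n + 1)) k :=
      (AddMonoidAlgebra.coeffLinearEquiv k).symm.toLinearMap ∘ₗ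
      ((Finsupp.mapRange.linearMap (α := Fin (n + 1) →₀ ℕ) φt) ∘ₗ
        (AddMonoidAlgebra.coeffLinearEquiv k).toLinearMap) ∘ₗ
        ((sumAlgEquiv k (Fin (n + 1)) (Fin (n + 1))).toLinearMap ∘ₗ
          (rename (R := k) Sum.swap).toLinearMap) with hΨ
    have coeff_Ψ : ∀ (Q : MvPolynomial (Fin (n + 1) ⊕ Fin (n + 1)) k) (γ : Fin (n + 1) →₀ ℕ),
        coeff γ (Ψ Q) = φt (coeffY k n Q γ) := fun Q γ => rfl
    -- Ψ kills multiples of the x-variable polynomials f j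
    have Ψ_inl : ∀ (j : Fin (n + 2)) (Q : MvPolynomial (Fin (n + 1) ⊕ Fin (n + 1)) k),
        Ψ (rename Sum.inl (f j) * Q) = 0 := by
      intro j Q
      ext γ
      rw [coeff_Ψ, coeff_zero]
      have hcY : coeffY k n (rename Sum.inl (f j) * Q) γ = f j * coeffY k n Q γ := by
        rw [coeffY, coeffY, map_mul, map_mul]
        have h1 : rename (R := k) Sum.swap
            (rename (Sum.inl : Fin (n + 1) → Fin (n + 1) ⊕ Fin (n + 1)) (f j))
            = rename (Sum.inr : Fin (n + 1) → Fin (n + 1) ⊕ Fin (n + 1)) (f j) := by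
          rw [rename_rename]
          rfl
        have h2 : (sumAlgEquiv k (Fin (n + 1)) (Fin (n + 1))) (rename Sum.inr (f j))
            = C (f j) := by
          have := DFunLike.congr_fun
            (sumAlgEquiv_comp_rename_inr k (Fin (n + 1)) (Fin (n + 1))) (f j)
          simpa [algebraMap_eq] using this
        rw [h1, h2, coeff_C_mul]
      rw [hcY, φt_mul_f]
    -- Ψ of a multiple of a y-variable polynomial
    have Ψ_inr : ∀ (g : MvPolynomial (Fin (n + 1)) k)
        (Q : MvPolynomial (Fin (n + 1) ⊕ Fin (n + 1)) k),
        Ψ (rename Sum.inr g * Q) = g * Ψ Q := by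
      intro g Q
      ext γ
      rw [coeff_Ψ, coeffY, map_mul, map_mul]
      have h1 : rename (R := k) Sum.swap
          (rename (Sum.inr : Fin (n + 1) → Fin (n + 1) ⊕ Fin (n + 1)) g)
          = rename (Sum.inl : Fin (n + 1) → Fin (n + 1) ⊕ Fin (n + 1)) g := by
        rw [rename_rename]
        rfl
      have h2 : (sumAlgEquiv k (Fin (n + 1)) (Fin (n + 1))) (rename Sum.inl g)
          = map (algebraMap k (MvPolynomial (Fin (n + 1)) k)) g := by
        have := DFunLike.congr_fun
          (sumAlgEquiv_comp_rename_inl k (Fin (n + 1)) (Fin (n + 1))) g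
        simpa [mapAlgHom_apply, Algebra.ofId] using this
      rw [h1, h2]
      rw [MvPolynomial.coeff_mul, MvPolynomial.coeff_mul, map_sum]
      refine Finset.sum_congr rfl fun p _ => ?_
      rw [coeff_map]
      have : (algebraMap k (MvPolynomial (Fin (n + 1)) k)) (coeff p.1 g) *
          coeff p.2 ((sumAlgEquiv k (Fin (n + 1)) (Fin (n + 1))) (rename Sum.swap Q))
          = coeff p.1 g • coeffY k n Q p.2 := by
        rw [coeffY, algebraMap_eq, ← smul_eq_C_mul]
      rw [this, map_smul, smul_eq_mul, coeff_Ψ]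
    -- the divided differences of each single f j
    have hEex : ∀ j : Fin (n + 2), ∃ e : Fin (n + 1) → MvPolynomial (Fin (n + 1) ⊕ Fin (n + 1)) k,
        ∀ c, IsDivDiff k n (f j) c (e c) := by
      intro j
      have hne : j ≠ (if j = 0 then (1 : Fin (n + 2)) else 0) := by
        split_ifs with h
        · rw [h]; exact Fin.zero_ne_one'
        · exact h
      obtain ⟨r, hr⟩ := Fin.exists_succAbove_eq hne
      refine ⟨fun c => D (if j = 0 then (1 : Fin (n + 2)) else 0) r c, fun c => ?_⟩
      have := hD (if j = 0 then (1 : Fin (n + 2)) else 0) r c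
      rwa [hr] at this
    choose E hE using hEex
    have huniq : ∀ (p : MvPolynomial (Fin (n + 1)) k) (c : Fin (n + 1))
        (D1 D2 : MvPolynomial (Fin (n + 1) ⊕ Fin (n + 1)) k),
        IsDivDiff k n p c D1 → IsDivDiff k n p c D2 → D1 = D2 := by
      intro p c D1 D2 h1 h2
      have hX : (X (Sum.inl c) - X (Sum.inr c) :
          MvPolynomial (Fin (n + 1) ⊕ Fin (n + 1)) k) ≠ 0 :=
        sub_ne_zero.mpr (fun h => Sum.inl_ne_inr (X_injective h))
      exact mul_right_cancel₀ hX (h1.trans h2.symm)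
    have hDE : ∀ (j : Fin (n + 2)) (r : Fin (n + 1)) (c : Fin (n + 1)),
        D j r c = E (j.succAbove r) c :=
      fun j r c => huniq _ _ _ _ (hD j r c) (hE (j.succAbove r) c)
    -- homogeneity of entries and determinants
    have hmixhom : ∀ (j : ℕ) (i : Fin (n + 2)),
        (aeval (mixv k n j) (f i)).IsHomogeneous d := by
      intro j i
      have := (hf i).aeval (mixv k n j) (n := 1) (fun s => by
        show ((if (s : ℕ) < j then X (Sum.inr s) else X (Sum.inl s)) :
          MvPolynomial (Fin (n + 1) ⊕ Fin (n + 1)) k).IsHomogeneous 1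
        split_ifs
        · exact isHomogeneous_X _ _
        · exact isHomogeneous_X _ _)
      rwa [one_mul] at this
    have hEhom : ∀ (i : Fin (n + 2)) (c : Fin (n + 1)),
        (E i c).IsHomogeneous (d - 1) := by
      intro i c
      have hg : (X (Sum.inl c) - X (Sum.inr c) :
          MvPolynomial (Fin (n + 1) ⊕ Fin (n + 1)) k).IsHomogeneous 1 :=
        (isHomogeneous_X _ _).sub (isHomogeneous_X _ _)
      have hg0 : (X (Sum.inl c) - X (Sum.inr c) :
          MvPolynomial (Fin (n + 1) ⊕ Fin (n + 1)) k) ≠ 0 :=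
        sub_ne_zero.mpr (fun h => Sum.inl_ne_inr (X_injective h))
      apply isHomogeneous_of_mul_homogeneous_one hg hg0
      rw [show d - 1 + 1 = d by omega]
      rw [hE i c]
      exact (hmixhom _ i).sub (hmixhom _ i)
    have hdethom : ∀ i : Fin (n + 2), ((D i).det).IsHomogeneous ρℕ := by
      intro i
      rw [hρ]
      apply det_mvPolynomial_isHomogeneous
      intro r c
      rw [hDE]
      exact hEhom _ _
    -- Ψ applied to the Bezoutians
    have hΨdet : ∀ i : Fin (n + 2), Ψ ((D i).det) =
        ∑ β ∈ Finset.Nat.antidiagonalTuple (n + 1) a,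
          φ (u i β) • monomial (Finsupp.equivFunOnFinite.symm β) (1 : k) := by
      intro i
      ext γ
      rw [coeff_Ψ]
      by_cases hγ : γ.degree = a
      · have hβ : Finsupp.equivFunOnFinite γ ∈ Finset.Nat.antidiagonalTuple (n + 1) a := by
          rw [Finset.Nat.mem_antidiagonalTuple]
          rw [← hγ, Finsupp.degree_eq_sum_univ]
          rfl
        have hq : (coeffY k n (D i).det γ).IsHomogeneous t := by
          rw [ht, ← hγ]
          exact coeffY_isHomogeneous (hdethom i) γ
        have hq' : coeffY k n (D i).det γ ∈ gradedPiece k n (((n + 1) * (d - 1) : ℤ) - a) := by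
          rw [hgp]
          exact (mem_homogeneousSubmodule _ _).mpr hq
        rw [φt_of_hom hq hq']
        have hval : (⟨coeffY k n (D i).det γ, hq'⟩ :
            ↥(gradedPiece k n (((n + 1) * (d - 1) : ℤ) - a))) = u i (Finsupp.equivFunOnFinite γ) := by
          apply Subtype.ext
          rw [hu i _ hβ]
          rw [Equiv.symm_apply_apply]
        rw [hval]
        rw [coeff_sum]
        rw [Finset.sum_eq_single_of_mem (Finsupp.equivFunOnFinite γ) hβ]
        · rw [coeff_smul, Equiv.symm_apply_apply, coeff_monomial, if_pos rfl,
            smul_eq_mul, mul_one]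
        · intro β _ hβne
          rw [coeff_smul, coeff_monomial, if_neg, smul_zero]
          intro h
          exact hβne (by rw [← h, Equiv.apply_symm_apply])
      · rw [coeff_sum]
        have hz : homogeneousComponent t (coeffY k n (D i).det γ) = 0 := by
          rw [ht]
          exact coeffY_homogeneousComponent_eq_zero (hdethom i) γ haρ hγ
        rw [φt_apply]
        have : (⟨homogeneousComponent t (coeffY k n (D i).det γ), hmem _⟩ :
            ↥(gradedPiece k n (((n + 1) * (d - 1) : ℤ) - a))) = 0 := by
          apply Subtype.ext
          rw [ZeroMemClass.coe_zero]
          exact hz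
        rw [this, map_zero]
        symm
        apply Finset.sum_eq_zero
        intro β hβmem
        rw [coeff_smul, coeff_monomial, if_neg, smul_zero]
        intro h
        apply hγ
        rw [← h, Finsupp.degree_eq_sum_univ]
        rw [Finset.Nat.mem_antidiagonalTuple] at hβmem
        exact hβmem
    -- the Bezoutian matrix identity
    set vx : Fin (n + 2) → MvPolynomial (Fin (n + 1) ⊕ Fin (n + 1)) k :=
      fun i => rename Sum.inl (f i) with hvx
    set vy : Fin (n + 2) → MvPolynomial (Fin (n + 1) ⊕ Fin (n + 1)) k :=
      fun i => rename Sum.inr (f i) with hvy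
    set w : Fin (n + 1) → Fin (n + 2) → MvPolynomial (Fin (n + 1) ⊕ Fin (n + 1)) k :=
      fun c i => E i c with hw
    have hfun0 : mixv k n 0 = X ∘ Sum.inl := by
      funext s
      show (if (s : ℕ) < 0 then X (Sum.inr s) else X (Sum.inl s)) = _
      rw [if_neg (Nat.not_lt_zero _)]
      rfl
    have hfunn : mixv k n (n + 1) = X ∘ Sum.inr := by
      funext s
      show (if (s : ℕ) < n + 1 then X (Sum.inr s) else X (Sum.inl s)) = _
      rw [if_pos s.isLt]
      rfl
    have hmix0 : ∀ i : Fin (n + 2), aeval (mixv k n 0) (f i) = vx i := by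
      intro i
      rw [hfun0, hvx]
      show aeval (X ∘ Sum.inl) (f i) = rename Sum.inl (f i)
      rw [rename_eq_aeval]
    have hmixn : ∀ i : Fin (n + 2), aeval (mixv k n (n + 1)) (f i) = vy i := by
      intro i
      rw [hfunn, hvy]
      show aeval (X ∘ Sum.inr) (f i) = rename Sum.inr (f i)
      rw [rename_eq_aeval]
    have hdiff : ∀ i, vx i - vy i =
        ∑ c : Fin (n + 1), (X (Sum.inl c) - X (Sum.inr c)) * w c i := by
      intro i
      have htel : ∑ c : Fin (n + 1),
          (aeval (mixv k n (c : ℕ)) (f i) - aeval (mixv k n ((c : ℕ) + 1)) (f i))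
          = aeval (mixv k n 0) (f i) - aeval (mixv k n (n + 1)) (f i) := by
        rw [Fin.sum_univ_eq_sum_range
          (fun c => aeval (mixv k n c) (f i) - aeval (mixv k n (c + 1)) (f i)) (n + 1)]
        exact Finset.sum_range_sub' (fun c => aeval (mixv k n c) (f i)) (n + 1)
      rw [← hmix0 i, ← hmixn i, ← htel]
      refine Finset.sum_congr rfl fun c _ => ?_
      rw [← hE i c, hw, mul_comm]
    have hstar : ∑ j : Fin (n + 2), (-1 : MvPolynomial (Fin (n + 1) ⊕ Fin (n + 1)) k) ^ (j : ℕ)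
          * vx j * (D j).det
        = ∑ j : Fin (n + 2), (-1 : MvPolynomial (Fin (n + 1) ⊕ Fin (n + 1)) k) ^ (j : ℕ)
          * vy j * (D j).det := by
      have hsub : ∀ j : Fin (n + 2),
          (Matrix.of (fun r c => w r (j.succAbove c)) :
            Matrix (Fin (n + 1)) (Fin (n + 1)) (MvPolynomial (Fin (n + 1) ⊕ Fin (n + 1)) k)).det
          = (D j).det := by
        intro j
        rw [← Matrix.det_transpose (D j)]
        congr 1
        ext r c
        rw [Matrix.of_apply, Matrix.transpose_apply, hw, hDE]
      have h1 := det_consMat_eq_of_diff vx vy w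
        (fun c => X (Sum.inl c) - X (Sum.inr c)) hdiff
      rw [det_consMat_expand, det_consMat_expand] at h1
      calc ∑ j : Fin (n + 2), (-1 : MvPolynomial (Fin (n + 1) ⊕ Fin (n + 1)) k) ^ (j : ℕ)
            * vx j * (D j).det
          = ∑ j : Fin (n + 2), (-1 : MvPolynomial (Fin (n + 1) ⊕ Fin (n + 1)) k) ^ (j : ℕ)
            * vx j * (Matrix.of (fun r c => w r (j.succAbove c)) :
              Matrix (Fin (n + 1)) (Fin (n + 1)) _).det := by
            exact Finset.sum_congr rfl fun j _ => by rw [hsub j]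
        _ = ∑ j : Fin (n + 2), (-1 : MvPolynomial (Fin (n + 1) ⊕ Fin (n + 1)) k) ^ (j : ℕ)
            * vy j * (Matrix.of (fun r c => w r (j.succAbove c)) :
              Matrix (Fin (n + 1)) (Fin (n + 1)) _).det := h1
        _ = ∑ j : Fin (n + 2), (-1 : MvPolynomial (Fin (n + 1) ⊕ Fin (n + 1)) k) ^ (j : ℕ)
            * vy j * (D j).det := Finset.sum_congr rfl fun j _ => by rw [hsub j]
    -- scalars
    have hsc : ∀ (j : ℕ) (Z : MvPolynomial (Fin (n + 1) ⊕ Fin (n + 1)) k),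
        (-1 : MvPolynomial (Fin (n + 1) ⊕ Fin (n + 1)) k) ^ j * Z = ((-1 : k) ^ j) • Z := by
      intro j Z
      rw [Algebra.smul_def, map_pow, map_neg, map_one]
    have hxzero : Ψ (∑ j : Fin (n + 2),
        (-1 : MvPolynomial (Fin (n + 1) ⊕ Fin (n + 1)) k) ^ (j : ℕ) * vx j * (D j).det) = 0 := by
      rw [map_sum]
      refine Finset.sum_eq_zero fun j _ => ?_
      rw [mul_assoc, hsc, map_smul, hvx]
      show ((-1 : k) ^ (j : ℕ)) • Ψ (rename Sum.inl (f j) * (D j).det) = 0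
      rw [Ψ_inl j, smul_zero]
    have hy : Ψ (∑ j : Fin (n + 2),
        (-1 : MvPolynomial (Fin (n + 1) ⊕ Fin (n + 1)) k) ^ (j : ℕ) * vy j * (D j).det)
        = ∑ j : Fin (n + 2), ((-1 : k) ^ (j : ℕ)) • (f j * Ψ ((D j).det)) := by
      rw [map_sum]
      refine Finset.sum_congr rfl fun j _ => ?_
      rw [mul_assoc, hsc, map_smul, hvy]
      show ((-1 : k) ^ (j : ℕ)) • Ψ (rename Sum.inr (f j) * (D j).det) = _
      rw [Ψ_inr (f j)]
    have hmain : ∑ j : Fin (n + 2), ((-1 : k) ^ (j : ℕ)) • (f j * Ψ ((D j).det)) = 0 := by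
      rw [← hy, ← hstar]
      exact hxzero
    calc ∑ i : Fin (n + 2),
        ((-1 : k) ^ (i : ℕ) •
          ∑ β ∈ Finset.Nat.antidiagonalTuple (n + 1) a,
            φ (u i β) • monomial (Finsupp.equivFunOnFinite.symm β) (1 : k)) * f i
        = ∑ i : Fin (n + 2), ((-1 : k) ^ (i : ℕ)) • (f i * Ψ ((D i).det)) := by
          refine Finset.sum_congr rfl fun i _ => ?_
          rw [← hΨdet i, smul_mul_assoc, mul_comm (Ψ ((D i).det)) (f i)]
      _ = 0 := hmain
end
end
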